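/- arXiv:1206.6027 — 2 statements merged into one kernel-verified Lean document; each statement's English description precedes it below -/
import Mathlib

section
/- For every multigraded ℕ-ideal J of P̄, the saturation is Sat(J) = {f ∈ P̄ : (∏_k t(k)^{μ_k})·f ∈ J for some finitely supported multidegree μ = (μ_k)_{k∈ℕ*}}. -/
noncomputable section

/-! ### Common definitions for the letterplace correspondence (La Scala)

`FA K Y` is the free associative algebra `K⟨Y⟩` (monoid algebra of the free monoid on `Y`);
`PL K Y` is the letterplace polynomial algebra `K[y(j) : y ∈ Y, j ∈ ℕ*]`.
The algebra `F̄ = K⟨X ∪ {t}⟩` is modeled as `FA K (Option X)` with `t = none`,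
and similarly `P̄ = PL K (Option X)`. -/

/-- The free associative algebra `K⟨Y⟩`. -/
abbrev FA (K : Type*) [CommSemiring K] (Y : Type*) := MonoidAlgebra K (FreeMonoid Y)

/-- The letterplace polynomial algebra `K[y(j)]`, with places in `ℕ* = ℕ+`. -/
abbrev PL (K : Type*) [CommSemiring K] (Y : Type*) := MvPolynomial (Y × ℕ+) K

variable (K : Type*) [Field K]

/-- The generator of `K⟨Y⟩` corresponding to a letter. -/
def gen {Y : Type*} (y : Y) : FA K Y := MonoidAlgebra.of K (FreeMonoid Y) (FreeMonoid.of y)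

/-- The extra letter `t` of `F̄ = K⟨X ∪ {t}⟩`. -/
def tv {X : Type*} : FA K (Option X) := gen K (none : Option X)

/-- `φ : F̄ → F̄`, the algebra endomorphism with `φ(x_i) = x_i`, `φ(t) = 1`. -/
def phi {X : Type*} : FA K (Option X) →ₐ[K] FA K (Option X) :=
  (MonoidAlgebra.lift K (FA K (Option X)) (FreeMonoid (Option X)))
    (FreeMonoid.lift fun o => Option.elim o 1 (fun x => gen K (some x)))

/-- `f` is homogeneous of degree `d` (all words in its support have length `d`). -/
def IsHomog {Y : Type*} (d : ℕ) (f : FA K Y) : Prop :=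
  ∀ w ∈ f.coeff.support, FreeMonoid.length w = d

/-- The homogeneous component of degree `d` of `f ∈ K⟨Y⟩`. -/
def homComp {Y : Type*} (d : ℕ) (f : FA K Y) : FA K Y :=
  ∑ w ∈ f.coeff.support.filter (fun w => FreeMonoid.length w = d), MonoidAlgebra.single w (f.coeff w)

/-- A two-sided ideal is graded (for the grading by total degree) iff it contains all
homogeneous components of its elements. -/
def IsGradedF {Y : Type*} (I : TwoSidedIdeal (FA K Y)) : Prop := ∀ f ∈ I, ∀ d, homComp K d f ∈ I

/-- `C ⊆ F̄`: the two-sided ideal generated by all homogeneous elements of `ker φ`,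
i.e. the largest graded ideal contained in `ker φ`. -/
def Cideal {X : Type*} : TwoSidedIdeal (FA K (Option X)) :=
  TwoSidedIdeal.span {f | (∃ d, IsHomog K d f) ∧ phi K f = 0}

/-- The embedding of free monoids `X* → (X ∪ {t})*`. -/
def embWord {X : Type*} : FreeMonoid X →* FreeMonoid (Option X) := FreeMonoid.map some

/-- The canonical embedding `F = K⟨X⟩ → F̄ = K⟨X ∪ {t}⟩`. -/
def emb {X : Type*} : FA K X →ₐ[K] FA K (Option X) :=
  (MonoidAlgebra.lift K (FA K (Option X)) (FreeMonoid X))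
    ((MonoidAlgebra.of K (FreeMonoid (Option X))).comp embWord)

/-- The top degree `deg(f)` of `f` (max length of a word in the support). -/
def degF {Y : Type*} (f : FA K Y) : ℕ := f.coeff.support.sup FreeMonoid.length

/-- The homogenization `f^* = Σ_k f_k t^{deg f − k} ∈ F̄` of `f ∈ F`. -/
def hstar {X : Type*} (f : FA K X) : FA K (Option X) :=
  ∑ w ∈ f.coeff.support,
    MonoidAlgebra.single
      (embWord w * (FreeMonoid.of (none : Option X)) ^ (degF K f - FreeMonoid.length w)) (f.coeff w)

/-- Homogenization of an element already written in `F̄` (used for elements of `φ(F̄) = F`). -/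
def hstarO {X : Type*} (f : FA K (Option X)) : FA K (Option X) :=
  ∑ w ∈ f.coeff.support,
    MonoidAlgebra.single
      (w * (FreeMonoid.of (none : Option X)) ^ (degF K f - FreeMonoid.length w)) (f.coeff w)

/-- The homogenization `I^*` of an ideal `I ⊆ F`: the two-sided ideal of `F̄` generated by all
homogeneous elements of `φ⁻¹(I)` (identifying `F` with its image in `F̄`). -/
def hstarIdeal {X : Type*} (I : TwoSidedIdeal (FA K X)) : TwoSidedIdeal (FA K (Option X)) :=
  TwoSidedIdeal.span {g | (∃ d, IsHomog K d g) ∧ ∃ f ∈ I, phi K g = emb K f}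

/-- The saturation `Sat(J) = φ(J)^*` of a graded ideal `C ⊆ J ⊆ F̄`: the two-sided ideal
generated by all homogeneous elements `g` with `φ(g) ∈ φ(J)`. -/
def SatF {X : Type*} (J : TwoSidedIdeal (FA K (Option X))) : TwoSidedIdeal (FA K (Option X)) :=
  TwoSidedIdeal.span {g | (∃ d, IsHomog K d g) ∧ ∃ h ∈ J, phi K g = phi K h}

/-! ### The commutative (letterplace) side -/

/-- The shift of letterplace variables: `k · y(j) = y(j + k)`. -/
def shiftVar {Y : Type*} (k : ℕ) (p : Y × ℕ+) : Y × ℕ+ :=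
  (p.1, ⟨p.2 + k, Nat.add_pos_left p.2.2 k⟩)

/-- The action of `k ∈ ℕ` on the letterplace algebra. -/
def shift {Y : Type*} (k : ℕ) : PL K Y →ₐ[K] PL K Y := MvPolynomial.rename (shiftVar k)

/-- An ideal of `PL K Y` is an ℕ-ideal if it is stable under all shifts. -/
def IsNIdeal {Y : Type*} (I : Ideal (PL K Y)) : Prop := ∀ k, ∀ f ∈ I, shift K k f ∈ I

/-- The ℕ-ideal `⟨S⟩_ℕ` generated by a set `S`. -/
def nspan {Y : Type*} (S : Set (PL K Y)) : Ideal (PL K Y) :=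
  Ideal.span {g | ∃ k, ∃ f ∈ S, g = shift K k f}

/-- The place multidegree `∂(m)` of a monomial. -/
def placeDeg {Y : Type*} (m : (Y × ℕ+) →₀ ℕ) : ℕ+ →₀ ℕ := Finsupp.mapDomain Prod.snd m

/-- `f` is multihomogeneous of place multidegree `μ`. -/
def IsMultiHomog {Y : Type*} (μ : ℕ+ →₀ ℕ) (f : PL K Y) : Prop :=
  ∀ m ∈ f.support, placeDeg m = μ

/-- The multihomogeneous component of multidegree `μ` of `f`. -/
def mComp {Y : Type*} (μ : ℕ+ →₀ ℕ) (f : PL K Y) : PL K Y :=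
  ∑ m ∈ f.support.filter (fun m => placeDeg m = μ),
    MvPolynomial.monomial m (MvPolynomial.coeff m f)

/-- An ideal is multigraded iff it contains all multihomogeneous components of its elements. -/
def IsMultiGraded {Y : Type*} (I : Ideal (PL K Y)) : Prop := ∀ f ∈ I, ∀ μ, mComp K μ f ∈ I

/-- `ψ : P̄ → P̄`, with `ψ(x_i(j)) = x_i(j)` and `ψ(t(j)) = 1`. -/
def psi {X : Type*} : PL K (Option X) →ₐ[K] PL K (Option X) :=
  MvPolynomial.aeval (fun p => Option.elim p.1 1 (fun x => MvPolynomial.X (some x, p.2)))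

/-- The canonical embedding `P → P̄`. -/
def embP {X : Type*} : PL K X →ₐ[K] PL K (Option X) :=
  MvPolynomial.rename (fun p => (some p.1, p.2))

/-- The top multidegree `∂(f)` of `f` (componentwise max over the support). -/
def topDeg {Y : Type*} (f : PL K Y) : ℕ+ →₀ ℕ := f.support.sup placeDeg

/-- The pure-`t` monomial `∏_k t(k)^{ν_k}` with exponents `ν`. -/
def tExp {X : Type*} (ν : ℕ+ →₀ ℕ) : ((Option X) × ℕ+) →₀ ℕ :=
  Finsupp.mapDomain (fun k => ((none : Option X), k)) ν

/-- The multihomogenization `f^* = Σ_μ f_μ ∏_k t(k)^{ν_k − μ_k} ∈ P̄` of `f ∈ P`. -/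
def mhstar {X : Type*} (f : PL K X) : PL K (Option X) :=
  ∑ m ∈ f.support,
    MvPolynomial.monomial
      (Finsupp.mapDomain (fun p => ((some p.1 : Option X), p.2)) m +
        tExp (topDeg K f - placeDeg m))
      (MvPolynomial.coeff m f)

/-- Multihomogenization of an element already written in `P̄` (used for elements of `ψ(P̄) = P`). -/
def mhstarO {X : Type*} (f : PL K (Option X)) : PL K (Option X) :=
  ∑ m ∈ f.support,
    MvPolynomial.monomial (m + tExp (topDeg K f - placeDeg m)) (MvPolynomial.coeff m f)

/-- The multihomogenization `I^*` of an ℕ-ideal `I ⊆ P`: the ℕ-ideal of `P̄` generated by all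
multihomogeneous elements of `ψ⁻¹(I)` (identifying `P` with its image in `P̄`). -/
def mhstarIdeal {X : Type*} (I : Ideal (PL K X)) : Ideal (PL K (Option X)) :=
  nspan K {g | (∃ μ, IsMultiHomog K μ g) ∧ ∃ f ∈ I, psi K g = embP K f}

/-- The saturation `Sat(J) = ψ(J)^*` of a multigraded ℕ-ideal `J ⊆ P̄`. -/
def SatP {X : Type*} (J : Ideal (PL K (Option X))) : Ideal (PL K (Option X)) :=
  nspan K {g | (∃ μ, IsMultiHomog K μ g) ∧ ∃ h ∈ J, psi K g = psi K h}

/-! ### The letterplace embedding -/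

/-- Exponent vector of the letterplace monomial `y_1(n+1) y_2(n+2) ⋯` of a word. -/
def wordExpAux {Y : Type*} : ℕ → List Y → ((Y × ℕ+) →₀ ℕ)
  | _, [] => 0
  | n, y :: w => Finsupp.single (y, ⟨n + 1, n.succ_pos⟩) 1 + wordExpAux (n + 1) w

/-- The letterplace monomial `y_1(1) y_2(2) ⋯ y_d(d)` of a word `y_1 y_2 ⋯ y_d`. -/
def wordExp {Y : Type*} (w : FreeMonoid Y) : (Y × ℕ+) →₀ ℕ := wordExpAux 0 (FreeMonoid.toList w)

/-- The letterplace embedding `ι : K⟨Y⟩ → PL K Y` (a `K`-linear map). -/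
def iota {Y : Type*} (f : FA K Y) : PL K Y :=
  Finsupp.sum f.coeff fun w c => MvPolynomial.monomial (wordExp w) c

/-- The set `L` of multilinear elements of `PL K Y`: multihomogeneous elements of `V = Im ι`. -/
def Lset {Y : Type*} : Set (PL K Y) :=
  {f | f ∈ Set.range (iota K (Y := Y)) ∧ ∃ μ, IsMultiHomog K μ f}

/-- A letterplace ideal (`L`-ideal): an ℕ-ideal ℕ-generated by its multilinear elements. -/
def IsLPIdeal {Y : Type*} (J : Ideal (PL K Y)) : Prop :=
  IsNIdeal K J ∧ J = nspan K ((J : Set (PL K Y)) ∩ Lset K)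

/-- The generators `x_i(1)t(2) − t(1)x_i(2)` of `D`. -/
def Dgens (X : Type*) : Set (PL K (Option X)) :=
  {g | ∃ x : X,
    g = MvPolynomial.X ((some x : Option X), (1 : ℕ+)) *
          MvPolynomial.X ((none : Option X), (2 : ℕ+)) -
        MvPolynomial.X ((none : Option X), (1 : ℕ+)) *
          MvPolynomial.X ((some x : Option X), (2 : ℕ+))}

/-- The generators `ῑ([t, x_i]) = t(1)x_i(2) − x_i(1)t(2)` of `D`. -/
def DgensT (X : Type*) : Set (PL K (Option X)) :=
  {g | ∃ x : X,
    g = MvPolynomial.X ((none : Option X), (1 : ℕ+)) *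
          MvPolynomial.X ((some x : Option X), (2 : ℕ+)) -
        MvPolynomial.X ((some x : Option X), (1 : ℕ+)) *
          MvPolynomial.X ((none : Option X), (2 : ℕ+))}

/-- `D ⊆ P̄`: the letterplace analogue of `C`. -/
def Did (X : Type*) : Ideal (PL K (Option X)) := nspan K (Dgens K X)

/-- The product `∏_{d < k ≤ d'} t(k)`. -/
def tProd (X : Type*) (d d' : ℕ) : PL K (Option X) :=
  ∏ k ∈ Finset.range (d' - d), MvPolynomial.X ((none : Option X), ⟨d + k + 1, Nat.succ_pos _⟩)

/-- The `L`-saturation `Sat_L(J)` of a letterplace ideal `D ⊆ J ⊆ P̄`. -/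
def SatL {X : Type*} (J : Ideal (PL K (Option X))) : Ideal (PL K (Option X)) :=
  nspan K {f | f ∈ Lset K ∧ ∃ d', MvPolynomial.totalDegree f ≤ d' ∧
    tProd K X (MvPolynomial.totalDegree f) d' * f ∈ J}

/-- `J` is `L`-saturated: `t(d+1)·f ∈ J` with `f` multilinear of degree `d` implies `f ∈ J`. -/
def IsLSat {X : Type*} (J : Ideal (PL K (Option X))) : Prop :=
  ∀ f ∈ Lset K (Y := Option X),
    MvPolynomial.X ((none : Option X), ⟨MvPolynomial.totalDegree f + 1, Nat.succ_pos _⟩) * f ∈ J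
      → f ∈ J

/-! ### Monomial orderings -/

/-- The shift action on letterplace monomials. -/
def shiftMon {Y : Type*} (k : ℕ) (m : (Y × ℕ+) →₀ ℕ) : (Y × ℕ+) →₀ ℕ :=
  Finsupp.mapDomain (shiftVar k) m

/-- A monomial ordering of a (possibly infinite) commutative polynomial ring, given as a strict
order relation on exponent vectors: a well-founded strict total order with `1` minimal,
compatible with multiplication of monomials. -/
structure IsMonOrd {σ : Type*} (r : (σ →₀ ℕ) → (σ →₀ ℕ) → Prop) : Prop where
  total : ∀ m n, r m n ∨ m = n ∨ r n m
  irrefl : ∀ m, ¬ r m m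
  trans : ∀ a b c, r a b → r b c → r a c
  wf : WellFounded r
  zero_min : ∀ m, ¬ r m 0
  add_compat : ∀ m n u, r m n → r (u + m) (u + n)

/-- The ordering is compatible with the ℕ-action (an `ℕ`-ordering). -/
def IsNCompat {Y : Type*} (r : ((Y × ℕ+) →₀ ℕ) → ((Y × ℕ+) →₀ ℕ) → Prop) : Prop :=
  ∀ (k : ℕ) m n, r m n → r (shiftMon k m) (shiftMon k n)

/-- The weight of a letterplace monomial: the largest place index occurring in it
(`⊥ = -∞` for the monomial `1`). -/
def wt {Y : Type*} (m : (Y × ℕ+) →₀ ℕ) : WithBot ℕ :=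
  m.support.sup (fun p => ((p.2 : ℕ) : WithBot ℕ))

/-- A weighted ordering: smaller weight implies smaller monomial. -/
def IsWeighted {Y : Type*} (r : ((Y × ℕ+) →₀ ℕ) → ((Y × ℕ+) →₀ ℕ) → Prop) : Prop :=
  ∀ m n, wt m < wt n → r m n

/-- A monomial ordering of the free algebra `K⟨Y⟩`: a well-founded strict total order on words
compatible with two-sided multiplication. -/
structure IsWordOrd {Y : Type*} (r : FreeMonoid Y → FreeMonoid Y → Prop) : Prop where
  total : ∀ m n, r m n ∨ m = n ∨ r n m
  irrefl : ∀ m, ¬ r m m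
  trans : ∀ a b c, r a b → r b c → r a c
  wf : WellFounded r
  mul_compat : ∀ m n u v, r m n → r (u * m * v) (u * n * v)

/-- A word ordering is graded if shorter words are smaller. -/
def IsGradedWordOrd {Y : Type*} (r : FreeMonoid Y → FreeMonoid Y → Prop) : Prop :=
  ∀ m n, FreeMonoid.length m < FreeMonoid.length n → r m n

/-- The word ordering of `K⟨Y⟩` induced by a monomial ordering of `PL K Y` via `ι`. -/
def inducedWordOrd {Y : Type*} (r : ((Y × ℕ+) →₀ ℕ) → ((Y × ℕ+) →₀ ℕ) → Prop)
    (m n : FreeMonoid Y) : Prop := r (wordExp m) (wordExp n)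

/-- The factor of a letterplace monomial at place `j` (a monomial of `P(j) ≅ P(1)`). -/
def fiber {Y : Type*} (m : (Y × ℕ+) →₀ ℕ) (j : ℕ+) : Y →₀ ℕ :=
  Finsupp.comapDomain (fun y => (y, j)) m (fun _ _ _ _ h => congrArg Prod.fst h)

/-- The place `ℕ`-ordering of `PL K Y` induced by a monomial ordering `r1` of `P(1)`:
compare the factors at the highest place where the two monomials differ. -/
def placeExt {Y : Type*} (r1 : (Y →₀ ℕ) → (Y →₀ ℕ) → Prop)
    (m n : (Y × ℕ+) →₀ ℕ) : Prop :=
  ∃ j : ℕ+, r1 (fiber m j) (fiber n j) ∧ ∀ j', j < j' → fiber m j' = fiber n j'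

/-! ### Leading monomials and Gröbner bases -/

/-- `m` is the leading monomial of `f ∈ PL K Y` with respect to the ordering `r`. -/
def IsLM {Y : Type*} (r : ((Y × ℕ+) →₀ ℕ) → ((Y × ℕ+) →₀ ℕ) → Prop)
    (f : PL K Y) (m : (Y × ℕ+) →₀ ℕ) : Prop :=
  m ∈ f.support ∧ ∀ m' ∈ f.support, m' ≠ m → r m' m

/-- `LM(S)`: the ideal generated by the leading monomials of the nonzero elements of `S`. -/
def LMideal {Y : Type*} (r : ((Y × ℕ+) →₀ ℕ) → ((Y × ℕ+) →₀ ℕ) → Prop)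
    (S : Set (PL K Y)) : Ideal (PL K Y) :=
  Ideal.span {p | ∃ f ∈ S, f ≠ 0 ∧ ∃ m, IsLM K r f m ∧ p = MvPolynomial.monomial m (1 : K)}

/-- The ideal generated by `ℕ·lm(G)`. -/
def shLMideal {Y : Type*} (r : ((Y × ℕ+) →₀ ℕ) → ((Y × ℕ+) →₀ ℕ) → Prop)
    (G : Set (PL K Y)) : Ideal (PL K Y) :=
  Ideal.span {p | ∃ g ∈ G, g ≠ 0 ∧ ∃ m, IsLM K r g m ∧
    ∃ k : ℕ, p = MvPolynomial.monomial (shiftMon k m) (1 : K)}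

/-- `G ⊆ I` is a Gröbner `ℕ`-basis of the ℕ-ideal `I`: `ℕ·lm(G)` generates `LM(I)`. -/
def IsGroebnerNB {Y : Type*} (r : ((Y × ℕ+) →₀ ℕ) → ((Y × ℕ+) →₀ ℕ) → Prop)
    (I : Ideal (PL K Y)) (G : Set (PL K Y)) : Prop :=
  G ⊆ (I : Set (PL K Y)) ∧ shLMideal K r G = LMideal K r (I : Set (PL K Y))

/-- `G` is a Gröbner `L`-basis of the letterplace ideal `J`: `G ⊆ J ∩ L` and the leading monomial
of every nonzero multilinear element of `J` is divisible by a shift of some `lm(g)`, `g ∈ G`. -/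
def IsGroebnerLB {Y : Type*} (r : ((Y × ℕ+) →₀ ℕ) → ((Y × ℕ+) →₀ ℕ) → Prop)
    (J : Ideal (PL K Y)) (G : Set (PL K Y)) : Prop :=
  G ⊆ (J : Set (PL K Y)) ∩ Lset K ∧
  ∀ f ∈ (J : Set (PL K Y)) ∩ Lset K, f ≠ 0 →
    ∃ g ∈ G, ∃ (k : ℕ) (mg mf : (Y × ℕ+) →₀ ℕ),
      IsLM K r g mg ∧ IsLM K r f mf ∧ shiftMon k mg ≤ mf

/-- `w` is the leading monomial (word) of `f ∈ K⟨Y⟩` with respect to the word ordering `r'`. -/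
def IsLMF {Y : Type*} (r' : FreeMonoid Y → FreeMonoid Y → Prop)
    (f : FA K Y) (w : FreeMonoid Y) : Prop :=
  w ∈ f.coeff.support ∧ ∀ w' ∈ f.coeff.support, w' ≠ w → r' w' w

/-- `G ⊆ I` is a Gröbner basis of the two-sided ideal `I ⊆ K⟨Y⟩`: the leading word of every
nonzero `f ∈ I` has the form `u · lm(g) · v` for some nonzero `g ∈ G`. -/
def IsGroebnerBF {Y : Type*} (r' : FreeMonoid Y → FreeMonoid Y → Prop)
    (I : TwoSidedIdeal (FA K Y)) (G : Set (FA K Y)) : Prop :=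
  G ⊆ (I : Set (FA K Y)) ∧
  ∀ f ∈ I, f ≠ 0 → ∃ g ∈ G, g ≠ 0 ∧ ∃ (u v wf wg : FreeMonoid Y),
    IsLMF K r' f wf ∧ IsLMF K r' g wg ∧ wf = u * wg * v

/-! ### Normal forms -/

/-- The generators `x_i(1) x_j(1)` of `N`. -/
def Ngens (Y : Type*) : Set (PL K Y) :=
  {g | ∃ i j : Y, g = MvPolynomial.X (i, (1 : ℕ+)) * MvPolynomial.X (j, (1 : ℕ+))}

/-- A polynomial is in normal form modulo `N` iff in each of its monomials all place indices
are pairwise distinct. -/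
def NormalModN {Y : Type*} (f : PL K Y) : Prop :=
  ∀ m ∈ f.support, ∀ k : ℕ+, placeDeg m k ≤ 1

/-- A polynomial is in normal form modulo `D` iff none of its monomials is divisible by a shift
of the leading monomial of some generator `t(1)x_i(2) − x_i(1)t(2)` of `D`. -/
def NormalModD {X : Type*} (r : (((Option X) × ℕ+) →₀ ℕ) → (((Option X) × ℕ+) →₀ ℕ) → Prop)
    (f : PL K (Option X)) : Prop :=
  ∀ m ∈ f.support, ∀ g ∈ DgensT K X, ∀ mg, IsLM K r g mg → ∀ k : ℕ, ¬ shiftMon k mg ≤ m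

/-- `G` is a Gröbner `L`-basis of `J` modulo `D`: its elements are multilinear elements of `J`
in normal form modulo `D`, and together with the generators of `D` they form a
Gröbner `L`-basis of `J`. -/
def IsGroebnerLBmodD {X : Type*}
    (r : (((Option X) × ℕ+) →₀ ℕ) → (((Option X) × ℕ+) →₀ ℕ) → Prop)
    (J : Ideal (PL K (Option X))) (G : Set (PL K (Option X))) : Prop :=
  (∀ g ∈ G, g ∈ (J : Set (PL K (Option X))) ∩ Lset K ∧ NormalModD K r g) ∧
  IsGroebnerLB K r J (G ∪ DgensT K X)

/-- The commutators `[t, x_i] = t x_i − x_i t` in `F̄`. -/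
def commGens (X : Type*) : Set (FA K (Option X)) :=
  {h | ∃ x : X, h = tv K * gen K (some x) - gen K (some x) * tv K}

/-- A polynomial of `F̄` is in normal form modulo `C` iff none of its words contains the leading
word of some commutator `[t, x_i]` as a factor. -/
def NormalModC {X : Type*} (r' : FreeMonoid (Option X) → FreeMonoid (Option X) → Prop)
    (f : FA K (Option X)) : Prop :=
  ∀ w ∈ f.coeff.support, ∀ g ∈ commGens K X, ∀ wg, IsLMF K r' g wg →
    ¬ ∃ u v, w = u * wg * v

/-! ### Concrete orderings on words -/

/-- The order on the letters of `X ∪ {t}` (with `X = ℕ`): `t ≺ x_1 ≺ x_2 ≺ ⋯`. -/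
def optLt : Option ℕ → Option ℕ → Prop
  | none, some _ => True
  | some i, some j => i < j
  | _, none => False

/-- The graded right lexicographic ordering on words: first compare lengths, then compare
letter by letter from the right. -/
def grRightLex {Y : Type*} (lt : Y → Y → Prop) (dflt : Y) (m n : FreeMonoid Y) : Prop :=
  FreeMonoid.length m < FreeMonoid.length n ∨
  (FreeMonoid.length m = FreeMonoid.length n ∧
    ∃ t < FreeMonoid.length m,
      lt ((FreeMonoid.toList m).getD t dflt) ((FreeMonoid.toList n).getD t dflt) ∧
      ∀ s, t < s → (FreeMonoid.toList m).getD s dflt = (FreeMonoid.toList n).getD s dflt)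

end

/-!
The right-hand side is the saturation `J : t^∞` of `J` by the pure `t`-monomials; call it `J'`.

`J' ⊆ Sat(J)`: if `t^μ f ∈ J`, each component `f_ν` of `f` satisfies `t^μ f_ν = (t^μ f)_{μ+ν} ∈ J`
and `ψ(f_ν) = ψ(t^μ f_ν)`, so `f_ν` is one of the generators of `Sat(J)`.

`Sat(J) ⊆ J'`: `J'` is an ℕ-ideal, since shifts of `t`-monomials are `t`-monomials. Every `h ∈ J`
has a multihomogeneous `q ∈ J` with `ψ(q) = ψ(h)`, obtained by multiplying the components of `h`
by `t`-monomials. A monomial of `P̄` is determined by its multidegree and its `x`-part, so `ψ` is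
injective on each multihomogeneous component. Hence for a generator `g` of degree `μ` with
`ψ(g) = ψ(h)` and such a `q` of degree `σ`, the elements `t^σ g` and `t^μ q` of degree `σ + μ` are
equal, so `t^σ g ∈ J`.
-/

open MvPolynomial

section WeightedHomogeneous

variable {σ R M : Type*} [CommSemiring R] [AddCommMonoid M] (w : σ → M)

theorem sum_weightedHomogeneousComponent_image [DecidableEq M] (φ : MvPolynomial σ R) :
    ∑ n ∈ φ.support.image (Finsupp.weight w), weightedHomogeneousComponent w n φ = φ := by
  rw [← finsum_eq_sum_of_support_subset, sum_weightedHomogeneousComponent]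
  intro n hn
  by_contra hn'
  refine hn (weightedHomogeneousComponent_eq_zero' n φ fun d hd hdn => hn' ?_)
  exact Finset.mem_coe.2 (Finset.mem_image.2 ⟨d, hd, hdn⟩)

theorem weightedHomogeneousComponent_monomial_mul [IsLeftCancelAdd M] (d : σ →₀ ℕ) (c : R)
    (n : M) (φ : MvPolynomial σ R) :
    weightedHomogeneousComponent w (Finsupp.weight w d + n) (monomial d c * φ) =
      monomial d c * weightedHomogeneousComponent w n φ := by
  classical
  ext e
  simp only [coeff_weightedHomogeneousComponent, coeff_monomial_mul']
  by_cases hde : d ≤ e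
  · have hweight : Finsupp.weight w e = Finsupp.weight w d + Finsupp.weight w (e - d) := by
      rw [← map_add, add_tsub_cancel_of_le hde]
    simp only [if_pos hde, hweight, add_right_inj]
    split_ifs <;> simp
  · simp only [if_neg hde, ite_self]

end WeightedHomogeneous

section PlaceGrading

variable {K : Type*} [Field K] {Y : Type*}

noncomputable def placeWeight (p : Y × ℕ+) : ℕ+ →₀ ℕ := Finsupp.single p.2 1

theorem placeDeg_eq_weight (m : (Y × ℕ+) →₀ ℕ) : placeDeg m = Finsupp.weight placeWeight m :=
  Finsupp.sum_congr fun _ _ => (Finsupp.smul_single_one _ _).symm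

theorem isMultiHomog_iff {μ : ℕ+ →₀ ℕ} {f : PL K Y} :
    IsMultiHomog K μ f ↔ IsWeightedHomogeneous placeWeight f μ := by
  simp only [IsMultiHomog, IsWeightedHomogeneous, mem_support_iff, placeDeg_eq_weight]

theorem mComp_eq_weightedHomogeneousComponent (μ : ℕ+ →₀ ℕ) (f : PL K Y) :
    mComp K μ f = weightedHomogeneousComponent placeWeight μ f := by
  classical
  ext d
  rw [coeff_weightedHomogeneousComponent, mComp, coeff_sum, ← placeDeg_eq_weight]
  simp only [coeff_monomial]
  rw [Finset.sum_ite_eq']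
  by_cases hd : coeff d f = 0 <;> simp [hd]

end PlaceGrading

section TMonomials

variable {K : Type*} [Field K] {X : Type*}

theorem tExp_add (μ ν : ℕ+ →₀ ℕ) : tExp (X := X) (μ + ν) = tExp μ + tExp ν :=
  Finsupp.mapDomain_add

theorem tExp_apply_none (ν : ℕ+ →₀ ℕ) (j : ℕ+) : tExp (X := X) ν (none, j) = ν j :=
  Finsupp.mapDomain_apply (fun _ _ h => congrArg Prod.snd h) ν j

theorem tExp_apply_some (ν : ℕ+ →₀ ℕ) (x : X) (j : ℕ+) : tExp ν (some x, j) = 0 :=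
  Finsupp.mapDomain_of_notMem_range ν _ (by rintro ⟨k, hk⟩; simp at hk)

theorem placeDeg_tExp (ν : ℕ+ →₀ ℕ) : placeDeg (tExp (X := X) ν) = ν := by
  rw [placeDeg, tExp, ← Finsupp.mapDomain_comp]
  exact Finsupp.mapDomain_id

theorem weight_tExp (ν : ℕ+ →₀ ℕ) : Finsupp.weight placeWeight (tExp (X := X) ν) = ν := by
  rw [← placeDeg_eq_weight, placeDeg_tExp]

variable (K) in
noncomputable def tMon (μ : ℕ+ →₀ ℕ) : PL K (Option X) := monomial (tExp μ) 1

theorem tMon_add (μ ν : ℕ+ →₀ ℕ) : tMon K (X := X) (μ + ν) = tMon K μ * tMon K ν := by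
  rw [tMon, tMon, tMon, monomial_mul, tExp_add, one_mul]

theorem isWeightedHomogeneous_tMon (μ : ℕ+ →₀ ℕ) :
    IsWeightedHomogeneous placeWeight (tMon K (X := X) μ) μ :=
  isWeightedHomogeneous_monomial _ _ _ (weight_tExp μ)

theorem exists_shift_tMon_eq (k : ℕ) (μ : ℕ+ →₀ ℕ) :
    ∃ ν, shift K k (tMon K (X := X) μ) = tMon K ν := by
  let shiftPlace (j : ℕ+) : ℕ+ := ⟨j + k, Nat.add_pos_left j.2 k⟩
  refine ⟨Finsupp.mapDomain shiftPlace μ, ?_⟩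
  rw [tMon, tMon, shift, rename_monomial, tExp, tExp, ← Finsupp.mapDomain_comp,
    ← Finsupp.mapDomain_comp]
  rfl

end TMonomials

section Dehomogenization

variable {K : Type*} [Field K] {X : Type*}

noncomputable def tDeg (m : (Option X × ℕ+) →₀ ℕ) : ℕ+ →₀ ℕ :=
  Finsupp.comapDomain (fun k => (none, k)) m fun _ _ _ _ h => congrArg Prod.snd h

noncomputable def xPart (m : (Option X × ℕ+) →₀ ℕ) : (Option X × ℕ+) →₀ ℕ :=
  m - tExp (tDeg m)

theorem tDeg_apply (m : (Option X × ℕ+) →₀ ℕ) (j : ℕ+) : tDeg m j = m (none, j) := rfl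

theorem xPart_apply_none (m : (Option X × ℕ+) →₀ ℕ) (j : ℕ+) : xPart m (none, j) = 0 := by
  rw [xPart, Finsupp.tsub_apply, tExp_apply_none, tDeg_apply, Nat.sub_self]

theorem xPart_apply_some (m : (Option X × ℕ+) →₀ ℕ) (x : X) (j : ℕ+) :
    xPart m (some x, j) = m (some x, j) := by
  rw [xPart, Finsupp.tsub_apply, tExp_apply_some, Nat.sub_zero]

theorem xPart_add_tExp_tDeg (m : (Option X × ℕ+) →₀ ℕ) : xPart m + tExp (tDeg m) = m := by
  ext ⟨_ | x, j⟩
  · rw [Finsupp.add_apply, xPart_apply_none, tExp_apply_none, zero_add, tDeg_apply]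
  · rw [Finsupp.add_apply, xPart_apply_some, tExp_apply_some, add_zero]

theorem placeDeg_eq_placeDeg_xPart_add_tDeg (m : (Option X × ℕ+) →₀ ℕ) :
    placeDeg m = placeDeg (xPart m) + tDeg m := by
  conv_lhs => rw [← xPart_add_tExp_tDeg m]
  rw [placeDeg, Finsupp.mapDomain_add, ← placeDeg, ← placeDeg, placeDeg_tExp]

theorem eq_of_placeDeg_eq_of_xPart_eq {m m' : (Option X × ℕ+) →₀ ℕ}
    (hdeg : placeDeg m = placeDeg m') (hx : xPart m = xPart m') : m = m' := by
  have ht : tDeg m = tDeg m' := by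
    rw [placeDeg_eq_placeDeg_xPart_add_tDeg m, placeDeg_eq_placeDeg_xPart_add_tDeg m', hx] at hdeg
    exact add_left_cancel hdeg
  rw [← xPart_add_tExp_tDeg m, ← xPart_add_tExp_tDeg m', hx, ht]

theorem psi_monomial (m : (Option X × ℕ+) →₀ ℕ) (c : K) :
    psi K (monomial m c) = monomial (xPart m) c := by
  rw [psi, aeval_monomial, monomial_eq, algebraMap_eq]
  congr 1
  conv_lhs => rw [← xPart_add_tExp_tDeg m]
  rw [Finsupp.prod_add_index' (fun _ => pow_zero _) (fun _ _ _ => pow_add _ _ _), tExp,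
    Finsupp.prod_mapDomain_index (fun _ => pow_zero _) (fun _ _ _ => pow_add _ _ _)]
  simp only [Option.elim_none, one_pow]
  rw [show (tDeg m).prod (fun _ _ => (1 : PL K (Option X))) = 1 from Finset.prod_const_one,
    mul_one]
  refine Finsupp.prod_congr fun p hp => ?_
  obtain ⟨_ | x, j⟩ := p
  · exact absurd (xPart_apply_none m j) (Finsupp.mem_support_iff.1 hp)
  · rfl

theorem psi_tMon (μ : ℕ+ →₀ ℕ) : psi K (tMon K (X := X) μ) = 1 := by
  have h : xPart (tExp (X := X) μ) = 0 := by
    ext ⟨_ | x, j⟩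
    · exact xPart_apply_none _ j
    · rw [xPart_apply_some, tExp_apply_some]; rfl
  rw [tMon, psi_monomial, h, monomial_zero', C_1]

end Dehomogenization

section Saturation

variable {K : Type*} [Field K] {X : Type*}

theorem shift_zero {Y : Type*} (f : PL K Y) : shift K 0 f = f := by
  rw [shift, show shiftVar (Y := Y) 0 = id from rfl, rename_id, AlgHom.id_apply]

theorem coeff_xPart_psi {ρ : ℕ+ →₀ ℕ} {r : PL K (Option X)}
    (hr : IsWeightedHomogeneous placeWeight r ρ) {m : (Option X × ℕ+) →₀ ℕ}
    (hm : Finsupp.weight placeWeight m = ρ) : coeff (xPart m) (psi K r) = coeff m r := by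
  classical
  conv_lhs => rw [r.as_sum, map_sum]
  simp only [psi_monomial, coeff_sum, coeff_monomial]
  rw [Finset.sum_eq_single m (fun m' hm' hne => if_neg fun hx => hne ?_) fun hm' => ?_, if_pos rfl]
  · refine eq_of_placeDeg_eq_of_xPart_eq ?_ hx
    rw [placeDeg_eq_weight, placeDeg_eq_weight, hr (mem_support_iff.1 hm'), hm]
  · rw [if_pos rfl, notMem_support_iff.1 hm']

theorem eq_of_isWeightedHomogeneous_of_psi_eq {ρ : ℕ+ →₀ ℕ} {a b : PL K (Option X)}
    (ha : IsWeightedHomogeneous placeWeight a ρ) (hb : IsWeightedHomogeneous placeWeight b ρ)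
    (hab : psi K a = psi K b) : a = b := by
  ext m
  by_cases hm : Finsupp.weight placeWeight m = ρ
  · have h := coeff_xPart_psi (ha.sub hb) hm
    rwa [map_sub, hab, sub_self, coeff_zero, coeff_sub, eq_comm, sub_eq_zero] at h
  · rw [ha.coeff_eq_zero m hm, hb.coeff_eq_zero m hm]

theorem exists_isWeightedHomogeneous_mem_psi_eq {J : Ideal (PL K (Option X))}
    (hMG : IsMultiGraded K J) {h : PL K (Option X)} (hh : h ∈ J) :
    ∃ σ, ∃ q ∈ J, IsWeightedHomogeneous placeWeight q σ ∧ psi K q = psi K h := by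
  classical
  rw [← sum_weightedHomogeneousComponent_image placeWeight h]
  refine Finset.sum_induction _ (fun p => ∃ σ, ∃ q ∈ J, IsWeightedHomogeneous placeWeight q σ ∧
      psi K q = psi K p) ?_ ⟨0, 0, J.zero_mem, isWeightedHomogeneous_zero _ _ _, rfl⟩ ?_
  · rintro p p' ⟨σ, q, hqJ, hq, hpsi⟩ ⟨σ', q', hq'J, hq', hpsi'⟩
    refine ⟨σ + σ', tMon K σ' * q + tMon K σ * q', J.add_mem (J.mul_mem_left _ hqJ)
      (J.mul_mem_left _ hq'J), ?_, ?_⟩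
    · rw [add_comm σ]
      exact ((isWeightedHomogeneous_tMon σ').mul hq).add
        (add_comm σ' σ ▸ (isWeightedHomogeneous_tMon σ).mul hq')
    · simp only [map_add, map_mul, psi_tMon, one_mul, hpsi, hpsi']
  · intro ν _
    refine ⟨ν, _, ?_, weightedHomogeneousComponent_isWeightedHomogeneous ν h, rfl⟩
    rw [← mComp_eq_weightedHomogeneousComponent]
    exact hMG h hh ν

variable (K) in
noncomputable def tSaturation (J : Ideal (PL K (Option X))) : Ideal (PL K (Option X)) where
  carrier := {f | ∃ μ, tMon K μ * f ∈ J}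
  zero_mem' := ⟨0, by rw [mul_zero]; exact J.zero_mem⟩
  add_mem' := by
    rintro f g ⟨μ, hf⟩ ⟨ν, hg⟩
    refine ⟨μ + ν, ?_⟩
    rw [show tMon K (μ + ν) * (f + g) = tMon K ν * (tMon K μ * f) + tMon K μ * (tMon K ν * g) by
      rw [tMon_add]; ring]
    exact J.add_mem (J.mul_mem_left _ hf) (J.mul_mem_left _ hg)
  smul_mem' := by
    rintro c f ⟨μ, hf⟩
    exact ⟨μ, by rw [smul_eq_mul, mul_left_comm]; exact J.mul_mem_left c hf⟩

theorem shift_mem_tSaturation {J : Ideal (PL K (Option X))} (hN : IsNIdeal K J) (k : ℕ)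
    {f : PL K (Option X)} (hf : f ∈ tSaturation K J) : shift K k f ∈ tSaturation K J := by
  obtain ⟨μ, hμ⟩ := hf
  obtain ⟨ν, hν⟩ := exists_shift_tMon_eq (K := K) k μ
  exact ⟨ν, by rw [← hν, ← map_mul]; exact hN k _ hμ⟩

theorem mem_tSaturation_of_psi_eq {J : Ideal (PL K (Option X))} (hMG : IsMultiGraded K J)
    {μ : ℕ+ →₀ ℕ} {g h : PL K (Option X)} (hg : IsWeightedHomogeneous placeWeight g μ)
    (hh : h ∈ J) (hpsi : psi K g = psi K h) : g ∈ tSaturation K J := by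
  obtain ⟨σ, q, hqJ, hq, hpsiq⟩ := exists_isWeightedHomogeneous_mem_psi_eq hMG hh
  have hgq : tMon K σ * g = tMon K μ * q := by
    refine eq_of_isWeightedHomogeneous_of_psi_eq ((isWeightedHomogeneous_tMon σ).mul hg) ?_ ?_
    · rw [add_comm]; exact (isWeightedHomogeneous_tMon μ).mul hq
    · simp only [map_mul, psi_tMon, one_mul, hpsi, hpsiq]
  exact ⟨σ, hgq ▸ J.mul_mem_left _ hqJ⟩

theorem satP_le_tSaturation {J : Ideal (PL K (Option X))} (hN : IsNIdeal K J)
    (hMG : IsMultiGraded K J) : SatP K J ≤ tSaturation K J := by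
  refine Ideal.span_le.2 ?_
  rintro _ ⟨k, g, ⟨⟨μ, hg⟩, h, hh, hpsi⟩, rfl⟩
  exact shift_mem_tSaturation hN k
    (mem_tSaturation_of_psi_eq hMG (isMultiHomog_iff.1 hg) hh hpsi)

theorem tSaturation_le_satP {J : Ideal (PL K (Option X))} (hMG : IsMultiGraded K J) :
    tSaturation K J ≤ SatP K J := by
  classical
  rintro f ⟨μ, hf⟩
  rw [← sum_weightedHomogeneousComponent_image placeWeight f]
  refine Ideal.sum_mem _ fun ν _ => Ideal.subset_span ⟨0, _, ⟨⟨ν, ?_⟩,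
    tMon K μ * weightedHomogeneousComponent placeWeight ν f, ?_, ?_⟩, (shift_zero _).symm⟩
  · exact isMultiHomog_iff.2 (weightedHomogeneousComponent_isWeightedHomogeneous ν f)
  · have h := hMG _ hf (μ + ν)
    have hcomp :=
      weightedHomogeneousComponent_monomial_mul placeWeight (tExp (X := X) μ) (1 : K) ν f
    rw [weight_tExp, ← tMon] at hcomp
    rwa [mComp_eq_weightedHomogeneousComponent, hcomp] at h
  · rw [map_mul, psi_tMon, one_mul]

theorem satP_eq_tSaturation {J : Ideal (PL K (Option X))} (hN : IsNIdeal K J)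
    (hMG : IsMultiGraded K J) : SatP K J = tSaturation K J :=
  le_antisymm (satP_le_tSaturation hN hMG) (tSaturation_le_satP hMG)

end Saturation

theorem statement_6_general (K : Type*) [Field K] (X : Type*)
    (J : Ideal (PL K (Option X))) (hN : IsNIdeal K J) (hMG : IsMultiGraded K J) :
    ∀ f : PL K (Option X),
      f ∈ SatP K J ↔ ∃ μ : ℕ+ →₀ ℕ, MvPolynomial.monomial (tExp μ) (1 : K) * f ∈ J :=
  SetLike.ext_iff.mp (satP_eq_tSaturation hN hMG)

/-- For every multigraded ℕ-ideal `J ⊆ P̄`,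
`Sat(J) = {f ∈ P̄ : (∏_k t(k)^{μ_k})·f ∈ J for some finitely supported multidegree μ}`. -/
theorem statement_6 (K : Type*) [Field K] (X : Type*) [Countable X]
    (J : Ideal (PL K (Option X))) (hN : IsNIdeal K J) (hMG : IsMultiGraded K J) :
    ∀ f : PL K (Option X),
      f ∈ SatP K J ↔ ∃ μ : ℕ+ →₀ ℕ, MvPolynomial.monomial (tExp μ) (1 : K) * f ∈ J :=
  statement_6_general K X J hN hMG
end

section
/- Let J be an L-saturated letterplace ideal of P̄ with D ⊆ J, and set I = ῑ^{-1}(J ∩ V̄). Then I is a saturated graded two-sided ideal of F̄ with C ⊆ I. -/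
/-!
Take `I = ῑ⁻¹(J)`. Since `J` is an ℕ-ideal, `ῑ(w f) = ῑ(w) · (|w| · ῑ(f))` makes `I` a left
ideal. Since `J` is ℕ-generated by multihomogeneous elements it is a homogeneous ideal, so `I` is
graded, and `ῑ(f w) = ῑ(f) · (d · ῑ(w))` for `f` of degree `d` then makes `I` a right ideal.
The generators of `D` are `ῑ` of the commutators `[x_i, t]`, so `t` is central modulo `I` and a
homogeneous `f` of degree `d` is congruent to `φ(f)` padded on the right with `t`s up to degree
`d`; in particular `C ⊆ I`. Finally `ῑ(g t) = t(d+1) · ῑ(g)` for `g` of degree `d`, so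
`L`-saturation strips the trailing `t`s one at a time, down to `φ(f)^*`.
-/

open MvPolynomial

section HomogeneousComponents

variable {K : Type*} [Field K] {Y : Type*}

lemma isHomog_homComp (d : ℕ) (f : FA K Y) : IsHomog K d (homComp K d f) := by
  classical
  intro w hw
  rw [homComp, MonoidAlgebra.coeff_sum] at hw
  obtain ⟨w', hw', hww'⟩ := Finset.mem_biUnion.mp (Finsupp.support_finsetSum hw)
  rw [MonoidAlgebra.coeff_single] at hww'
  rw [Finset.mem_singleton.mp (Finsupp.support_single_subset hww')]
  exact (Finset.mem_filter.mp hw').2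

lemma sum_homComp (f : FA K Y) :
    ∑ d ∈ Finset.range (degF K f + 1), homComp K d f = f := by
  simp only [homComp]
  rw [Finset.sum_fiberwise_of_maps_to (g := FreeMonoid.length)
    (t := Finset.range (degF K f + 1))
    fun w hw => Finset.mem_range_succ_iff.mpr (Finset.le_sup hw)]
  exact MonoidAlgebra.sum_coeff_single f

end HomogeneousComponents

section FreeAlgebraWithT

variable {K : Type*} [Field K] {X : Type*}

lemma FreeMonoid.length_pow {α : Type*} (w : FreeMonoid α) (n : ℕ) :
    FreeMonoid.length (w ^ n) = n * FreeMonoid.length w := by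
  induction n with
  | zero => rw [pow_zero, FreeMonoid.length_one, Nat.zero_mul]
  | succ n ih => rw [pow_succ, FreeMonoid.length_mul, ih, Nat.succ_mul]

def eraseT : FreeMonoid (Option X) →* FreeMonoid (Option X) :=
  FreeMonoid.lift fun o => o.elim 1 fun x => FreeMonoid.of (some x)

@[simp]
lemma eraseT_of_none : eraseT (FreeMonoid.of (none : Option X)) = 1 := rfl

@[simp]
lemma eraseT_of_some (x : X) : eraseT (FreeMonoid.of (some x)) = FreeMonoid.of (some x) := rfl

lemma length_eraseT_le (w : FreeMonoid (Option X)) :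
    FreeMonoid.length (eraseT w) ≤ FreeMonoid.length w := by
  induction w using FreeMonoid.inductionOn' with
  | one => simp
  | of_mul a w ih =>
    cases a <;> simp [FreeMonoid.length_mul] <;> omega

lemma phi_single (w : FreeMonoid (Option X)) (c : K) :
    phi K (MonoidAlgebra.single w c) = MonoidAlgebra.single (eraseT w) c := by
  have : (FreeMonoid.lift fun o : Option X => o.elim 1 fun x => gen K (some x)) =
      (MonoidAlgebra.of K _).comp eraseT :=
    FreeMonoid.hom_eq fun o => by cases o <;> rfl
  rw [phi, MonoidAlgebra.lift_single, this, MonoidHom.comp_apply, MonoidAlgebra.of_apply,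
    MonoidAlgebra.smul_single', mul_one]

lemma length_le_of_mem_support_phi {d : ℕ} {f : FA K (Option X)} (hf : IsHomog K d f)
    {u : FreeMonoid (Option X)} (hu : u ∈ (phi K f).coeff.support) :
    FreeMonoid.length u ≤ d := by
  classical
  rw [← MonoidAlgebra.sum_coeff_single f, Finsupp.sum, map_sum, MonoidAlgebra.coeff_sum] at hu
  obtain ⟨w, hw, hwu⟩ := Finset.mem_biUnion.mp (Finsupp.support_finsetSum hu)
  rw [phi_single, MonoidAlgebra.coeff_single] at hwu
  rw [Finset.mem_singleton.mp (Finsupp.support_single_subset hwu), ← hf w hw]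
  exact length_eraseT_le w

variable (K) in
noncomputable def padT (d : ℕ) : FA K (Option X) →ₗ[K] FA K (Option X) :=
  MonoidAlgebra.mapDomainLinearMap K K fun u => u * FreeMonoid.of none ^ (d - FreeMonoid.length u)

lemma padT_single (d : ℕ) (u : FreeMonoid (Option X)) (c : K) :
    padT K d (MonoidAlgebra.single u c) =
      MonoidAlgebra.single (u * FreeMonoid.of none ^ (d - FreeMonoid.length u)) c :=
  MonoidAlgebra.mapDomainLinearMap_single _ _ _

lemma hstarO_eq_padT (g : FA K (Option X)) : hstarO K g = padT K (degF K g) g := by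
  rw [hstarO]
  set d := degF K g
  conv_rhs => rw [← MonoidAlgebra.sum_coeff_single g, Finsupp.sum, map_sum]
  simp only [padT_single]

lemma tv_mul_single (w : FreeMonoid (Option X)) (c : K) :
    tv K * MonoidAlgebra.single w c = MonoidAlgebra.single (FreeMonoid.of none * w) c := by
  rw [tv, gen, MonoidAlgebra.of_apply, MonoidAlgebra.single_mul_single, one_mul]

lemma single_mul_tv (w : FreeMonoid (Option X)) (c : K) :
    MonoidAlgebra.single w c * tv K = MonoidAlgebra.single (w * FreeMonoid.of none) c := by
  rw [tv, gen, MonoidAlgebra.of_apply, MonoidAlgebra.single_mul_single, mul_one]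

lemma gen_mul_single (a : Option X) (w : FreeMonoid (Option X)) (c : K) :
    gen K a * MonoidAlgebra.single w c = MonoidAlgebra.single (FreeMonoid.of a * w) c := by
  rw [gen, MonoidAlgebra.of_apply, MonoidAlgebra.single_mul_single, one_mul]

section Commutators

variable {I : TwoSidedIdeal (FA K (Option X))}
  (hI : ∀ x : X, tv K * gen K (some x) - gen K (some x) * tv K ∈ I)
include hI

lemma tv_mul_sub_mul_tv_mem (w : FreeMonoid (Option X)) (c : K) :
    tv K * MonoidAlgebra.single w c - MonoidAlgebra.single w c * tv K ∈ I := by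
  induction w using FreeMonoid.inductionOn' with
  | one => simp [tv_mul_single, single_mul_tv]
  | of_mul a w ih =>
    rw [← gen_mul_single, show ∀ t g s : FA K (Option X),
      t * (g * s) - g * s * t = (t * g - g * t) * s + g * (t * s - s * t) by intros; noncomm_ring]
    refine I.add_mem (I.mul_mem_right _ _ ?_) (I.mul_mem_left _ _ ih)
    cases a with
    | none => simp [tv]
    | some x => exact hI x

lemma single_sub_single_eraseT_mem (w : FreeMonoid (Option X)) (c : K) :
    MonoidAlgebra.single w c - MonoidAlgebra.single
      (eraseT w * FreeMonoid.of none ^ (FreeMonoid.length w - FreeMonoid.length (eraseT w))) c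
      ∈ I := by
  induction w using FreeMonoid.inductionOn' with
  | one => simp
  | of_mul a w ih =>
    cases a with
    | none =>
      have hlen : FreeMonoid.length (FreeMonoid.of none * w) - FreeMonoid.length (eraseT w) =
          FreeMonoid.length w - FreeMonoid.length (eraseT w) + 1 := by
        have := length_eraseT_le w
        rw [FreeMonoid.length_mul, FreeMonoid.length_of]
        omega
      rw [map_mul, eraseT_of_none, one_mul, hlen, pow_succ, ← mul_assoc, ← single_mul_tv,
        ← tv_mul_single, show ∀ t a b : FA K (Option X),
          t * a - b * t = t * (a - b) + (t * b - b * t) by intros; noncomm_ring]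
      exact I.add_mem (I.mul_mem_left _ _ ih) (tv_mul_sub_mul_tv_mem hI _ _)
    | some x =>
      rw [map_mul, eraseT_of_some, FreeMonoid.length_mul, FreeMonoid.length_mul,
        FreeMonoid.length_of, Nat.add_sub_add_left, mul_assoc, ← gen_mul_single,
        ← gen_mul_single, ← mul_sub]
      exact I.mul_mem_left _ _ ih

lemma sub_padT_phi_mem {d : ℕ} {f : FA K (Option X)} (hf : IsHomog K d f) :
    f - padT K d (phi K f) ∈ I := by
  rw [← MonoidAlgebra.sum_coeff_single f, Finsupp.sum, map_sum, map_sum,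
    ← Finset.sum_sub_distrib]
  refine sum_mem fun w hw => ?_
  rw [phi_single, padT_single, ← hf w hw]
  exact single_sub_single_eraseT_mem hI w _

lemma cideal_le : Cideal K ≤ I := by
  refine TwoSidedIdeal.span_le.mpr ?_
  rintro f ⟨⟨d, hd⟩, hf⟩
  simpa [hf] using sub_padT_phi_mem hI hd

end Commutators

end FreeAlgebraWithT

section Saturation

variable {K : Type*} [Field K] {X : Type*}

lemma isHomog_padT {e : ℕ} {g : FA K (Option X)}
    (hg : ∀ u ∈ g.coeff.support, FreeMonoid.length u ≤ e) : IsHomog K e (padT K e g) := by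
  classical
  intro w hw
  obtain ⟨u, hu, rfl⟩ := Finset.mem_image.mp (Finsupp.mapDomain_support hw)
  rw [FreeMonoid.length_mul, FreeMonoid.length_pow, FreeMonoid.length_of, Nat.mul_one]
  exact Nat.add_sub_cancel' (hg u hu)

lemma padT_succ {e : ℕ} {g : FA K (Option X)}
    (hg : ∀ u ∈ g.coeff.support, FreeMonoid.length u ≤ e) :
    padT K (e + 1) g = padT K e g * tv K := by
  conv_lhs => rw [← MonoidAlgebra.sum_coeff_single g]
  conv_rhs => rw [← MonoidAlgebra.sum_coeff_single g]
  rw [Finsupp.sum, map_sum, map_sum, Finset.sum_mul]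
  refine Finset.sum_congr rfl fun u hu => ?_
  rw [padT_single, padT_single, single_mul_tv, mul_assoc, ← pow_succ,
    Nat.sub_add_comm (hg u hu)]

variable {I : TwoSidedIdeal (FA K (Option X))}
  (hsat : ∀ (e : ℕ) (h : FA K (Option X)), IsHomog K e h → h * tv K ∈ I → h ∈ I)
include hsat

lemma padT_mem_of_padT_add_mem {e : ℕ} {g : FA K (Option X)}
    (hg : ∀ u ∈ g.coeff.support, FreeMonoid.length u ≤ e) (j : ℕ)
    (h : padT K (e + j) g ∈ I) : padT K e g ∈ I := by
  induction j generalizing e with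
  | zero => exact h
  | succ j ih =>
    have h1 : padT K (e + 1) g ∈ I :=
      ih (fun u hu => (hg u hu).trans e.le_succ) (by rwa [Nat.add_right_comm, Nat.add_assoc])
    rw [padT_succ hg] at h1
    exact hsat e _ (isHomog_padT hg) h1

lemma hstarO_phi_mem (hI : ∀ x : X, tv K * gen K (some x) - gen K (some x) * tv K ∈ I)
    {d : ℕ} {f : FA K (Option X)} (hf : IsHomog K d f) (hfI : f ∈ I) :
    hstarO K (phi K f) ∈ I := by
  have hpad : padT K d (phi K f) ∈ I := by
    simpa using I.sub_mem hfI (sub_padT_phi_mem hI hf)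
  have hdeg : degF K (phi K f) ≤ d :=
    Finset.sup_le fun u hu => length_le_of_mem_support_phi hf hu
  rw [hstarO_eq_padT]
  refine padT_mem_of_padT_add_mem hsat (fun u hu => Finset.le_sup hu) (d - degF K (phi K f)) ?_
  rwa [Nat.add_sub_cancel' hdeg]

end Saturation

section WordExp

variable {K : Type*} [Field K] {Y : Type*}

lemma wordExpAux_append (u v : List Y) (n : ℕ) :
    wordExpAux n (u ++ v) = wordExpAux n u + wordExpAux (n + u.length) v := by
  induction u generalizing n with
  | nil => simp [wordExpAux]
  | cons y u ih =>
    simp only [List.cons_append, wordExpAux, ih, add_assoc, List.length_cons]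
    rw [Nat.add_comm u.length 1, ← Nat.add_assoc]

lemma shiftMon_wordExpAux (l : List Y) (n k : ℕ) :
    shiftMon k (wordExpAux n l) = wordExpAux (n + k) l := by
  induction l generalizing n with
  | nil => exact Finsupp.mapDomain_zero
  | cons y l ih =>
    rw [wordExpAux, shiftMon, Finsupp.mapDomain_add, Finsupp.mapDomain_single, ← shiftMon, ih,
      wordExpAux]
    simp only [shiftVar, PNat.mk_coe, Nat.add_right_comm n 1 k]

lemma wordExp_mul (u v : FreeMonoid Y) :
    wordExp (u * v) = wordExp u + shiftMon (FreeMonoid.length u) (wordExp v) := by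
  rw [wordExp, FreeMonoid.toList_mul, wordExpAux_append, wordExp, wordExp,
    shiftMon_wordExpAux]
  rfl

lemma wordExp_of (y : Y) : wordExp (FreeMonoid.of y) = Finsupp.single (y, 1) 1 := by
  simp [wordExp, wordExpAux]

lemma degree_wordExp (w : FreeMonoid Y) : (wordExp w).degree = FreeMonoid.length w := by
  suffices ∀ (l : List Y) n, (wordExpAux n l).degree = l.length from this _ 0
  intro l
  induction l with
  | nil => simp [wordExpAux]
  | cons y l ih => intro n; simp [wordExpAux, ih, add_comm]

lemma placeDeg_wordExp_eq {u v : FreeMonoid Y} (h : FreeMonoid.length u = FreeMonoid.length v) :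
    placeDeg (wordExp u) = placeDeg (wordExp v) := by
  suffices ∀ (l l' : List Y), l.length = l'.length →
      ∀ n, placeDeg (wordExpAux n l) = placeDeg (wordExpAux n l') from this _ _ h 0
  intro l
  induction l with
  | nil => intro l' h n; rw [List.length_nil, eq_comm, List.length_eq_zero_iff] at h; rw [h]
  | cons y l ih =>
    rintro (_ | ⟨y', l'⟩) h n
    · simp at h
    · simp only [wordExpAux, placeDeg, Finsupp.mapDomain_add, Finsupp.mapDomain_single] at ih ⊢
      rw [ih l' (by simpa using h)]

end WordExp

section Iota

variable (K : Type*) [Field K] (Y : Type*)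

noncomputable def iotaLinearMap : FA K Y →ₗ[K] PL K Y :=
  Finsupp.lsum K (fun w => monomial (wordExp w)) ∘ₗ
    (MonoidAlgebra.coeffLinearEquiv K).toLinearMap

variable {K Y}

lemma iota_zero : iota K (0 : FA K Y) = 0 := map_zero (iotaLinearMap K Y)

lemma iota_add (f g : FA K Y) : iota K (f + g) = iota K f + iota K g :=
  map_add (iotaLinearMap K Y) f g

lemma iota_neg (f : FA K Y) : iota K (-f) = -iota K f := map_neg (iotaLinearMap K Y) f

lemma iota_sub (f g : FA K Y) : iota K (f - g) = iota K f - iota K g :=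
  map_sub (iotaLinearMap K Y) f g

lemma iota_sum {ι : Type*} (s : Finset ι) (f : ι → FA K Y) :
    iota K (∑ i ∈ s, f i) = ∑ i ∈ s, iota K (f i) :=
  map_sum (iotaLinearMap K Y) f s

lemma iota_eq_sum (f : FA K Y) :
    iota K f = ∑ w ∈ f.coeff.support, monomial (wordExp w) (f.coeff w) := rfl

lemma iota_single (w : FreeMonoid Y) (c : K) :
    iota K (MonoidAlgebra.single w c) = monomial (wordExp w) c := by
  rw [iota, MonoidAlgebra.coeff_single]
  exact Finsupp.sum_single_index (map_zero _)

lemma exists_wordExp_eq_of_mem_support_iota {f : FA K Y} {m : (Y × ℕ+) →₀ ℕ}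
    (hm : m ∈ (iota K f).support) : ∃ w ∈ f.coeff.support, wordExp w = m := by
  classical
  rw [iota_eq_sum] at hm
  obtain ⟨w, hw, hmw⟩ := Finset.mem_biUnion.mp (support_sum hm)
  exact ⟨w, hw, (Finset.mem_singleton.mp (support_monomial_subset hmw)).symm⟩

lemma isHomogeneous_iota {d : ℕ} {f : FA K Y} (hf : IsHomog K d f) :
    (iota K f).IsHomogeneous d := by
  intro m hm
  obtain ⟨w, hw, rfl⟩ := exists_wordExp_eq_of_mem_support_iota (mem_support_iff.mpr hm)
  rw [Pi.one_def, ← Finsupp.degree_eq_weight_one, degree_wordExp, hf w hw]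

lemma isMultiHomog_iota {d : ℕ} {f : FA K Y} (hf : IsHomog K d f) {w₀ : FreeMonoid Y}
    (hw₀ : FreeMonoid.length w₀ = d) : IsMultiHomog K (placeDeg (wordExp w₀)) (iota K f) := by
  intro m hm
  obtain ⟨w, hw, rfl⟩ := exists_wordExp_eq_of_mem_support_iota hm
  exact placeDeg_wordExp_eq ((hf w hw).trans hw₀.symm)

lemma iota_homComp (d : ℕ) (f : FA K Y) :
    iota K (homComp K d f) = homogeneousComponent d (iota K f) := by
  rw [homComp, iota_sum, iota_eq_sum, map_sum, Finset.sum_filter]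
  refine Finset.sum_congr rfl fun w _ => ?_
  rw [iota_single, homogeneousComponent_of_mem
    (isHomogeneous_monomial _ (degree_wordExp w))]
  simp only [eq_comm]

lemma shift_monomial (k : ℕ) (m : (Y × ℕ+) →₀ ℕ) (c : K) :
    shift K k (monomial m c) = monomial (shiftMon k m) c :=
  rename_monomial _ _ _

lemma iota_single_mul (w : FreeMonoid Y) (c : K) (f : FA K Y) :
    iota K (MonoidAlgebra.single w c * f) =
      monomial (wordExp w) c * shift K (FreeMonoid.length w) (iota K f) := by
  induction f using MonoidAlgebra.induction_linear with
  | zero => simp only [mul_zero, iota_zero, map_zero]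
  | add f g hf hg => simp only [mul_add, iota_add, map_add, hf, hg]
  | single w' c' =>
    simp only [MonoidAlgebra.single_mul_single, iota_single,
      shift_monomial, monomial_mul, wordExp_mul]

lemma iota_mul_single {d : ℕ} {f : FA K Y} (hf : IsHomog K d f) (w : FreeMonoid Y) (c : K) :
    iota K (f * MonoidAlgebra.single w c) =
      iota K f * monomial (shiftMon d (wordExp w)) c := by
  conv_lhs => rw [← MonoidAlgebra.sum_coeff_single f]
  rw [Finsupp.sum, Finset.sum_mul, iota_sum, iota_eq_sum, Finset.sum_mul]
  refine Finset.sum_congr rfl fun w' hw' => ?_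
  rw [MonoidAlgebra.single_mul_single, iota_single, monomial_mul,
    wordExp_mul, hf w' hw']

end Iota

section LetterplaceIdeal

variable {K : Type*} [Field K] {Y : Type*} {J : Ideal (PL K Y)}

lemma IsMultiHomog.isHomogeneous {μ : ℕ+ →₀ ℕ} {p : PL K Y} (h : IsMultiHomog K μ p) :
    p.IsHomogeneous μ.degree := by
  intro m hm
  rw [Pi.one_def, ← Finsupp.degree_eq_weight_one, ← h m (mem_support_iff.mpr hm), placeDeg,
    Finsupp.degree_mapDomain]

attribute [local instance] MvPolynomial.gradedAlgebra in
lemma IsLPIdeal.isHomogeneous (hJ : IsLPIdeal K J) :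
    J.IsHomogeneous (homogeneousSubmodule (Y × ℕ+) K) := by
  rw [hJ.2, nspan]
  refine Ideal.homogeneous_span _ _ ?_
  rintro _ ⟨k, f, ⟨-, -, μ, hμ⟩, rfl⟩
  exact ⟨μ.degree, hμ.isHomogeneous.rename_isHomogeneous⟩

lemma IsLPIdeal.iota_homComp_mem (hJ : IsLPIdeal K J) {f : FA K Y} (hf : iota K f ∈ J) (d : ℕ) :
    iota K (homComp K d f) ∈ J := by
  rw [iota_homComp]
  exact homogeneousComponent_mem_of_mem hJ.isHomogeneous hf d

lemma IsLPIdeal.iota_mul_mem_left (hJ : IsLPIdeal K J) (g : FA K Y) {f : FA K Y}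
    (hf : iota K f ∈ J) : iota K (g * f) ∈ J := by
  induction g using MonoidAlgebra.induction_linear with
  | zero => simpa only [zero_mul, iota_zero] using J.zero_mem
  | add g g' hg hg' => rw [add_mul, iota_add]; exact J.add_mem hg hg'
  | single w c => rw [iota_single_mul]; exact J.mul_mem_left _ (hJ.1 _ _ hf)

lemma iota_mul_mem_right_of_isHomog {d : ℕ} {f : FA K Y} (hf : IsHomog K d f)
    (hfJ : iota K f ∈ J) (g : FA K Y) : iota K (f * g) ∈ J := by
  induction g using MonoidAlgebra.induction_linear with
  | zero => simpa only [mul_zero, iota_zero] using J.zero_mem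
  | add g g' hg hg' => rw [mul_add, iota_add]; exact J.add_mem hg hg'
  | single w c => rw [iota_mul_single hf]; exact J.mul_mem_right _ hfJ

lemma IsLPIdeal.iota_mul_mem_right (hJ : IsLPIdeal K J) {f : FA K Y} (hf : iota K f ∈ J)
    (g : FA K Y) : iota K (f * g) ∈ J := by
  rw [← sum_homComp f, Finset.sum_mul, iota_sum]
  exact J.sum_mem fun d _ =>
    iota_mul_mem_right_of_isHomog (isHomog_homComp d f) (hJ.iota_homComp_mem hf d) g

noncomputable def comapIota (hJ : IsLPIdeal K J) : TwoSidedIdeal (FA K Y) :=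
  TwoSidedIdeal.mk' (iota K ⁻¹' J) (by simp [iota_zero])
    (fun hf hg => by simp only [Set.mem_preimage, iota_add] at *; exact J.add_mem hf hg)
    (fun hf => by simp only [Set.mem_preimage, iota_neg] at *; exact J.neg_mem hf)
    (fun hf => hJ.iota_mul_mem_left _ hf) (fun hf => hJ.iota_mul_mem_right hf _)

@[simp]
lemma mem_comapIota (hJ : IsLPIdeal K J) {f : FA K Y} : f ∈ comapIota hJ ↔ iota K f ∈ J :=
  TwoSidedIdeal.mem_mk' _ _ _ _ _ _ f

lemma IsLPIdeal.isGradedF_comapIota (hJ : IsLPIdeal K J) : IsGradedF K (comapIota hJ) :=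
  fun _ hf d => (mem_comapIota hJ).mpr (hJ.iota_homComp_mem ((mem_comapIota hJ).mp hf) d)

end LetterplaceIdeal

section LetterplaceHypotheses

variable {K : Type*} [Field K] {X : Type*} {J : Ideal (PL K (Option X))}

lemma iota_gen_mul_gen (a b : Option X) :
    iota K (gen K a * gen K b) = MvPolynomial.X (a, 1) * MvPolynomial.X (b, 2) := by
  rw [show gen K b = MonoidAlgebra.single (FreeMonoid.of b) 1 from rfl, gen_mul_single,
    iota_single, wordExp_mul, wordExp_of, wordExp_of, FreeMonoid.length_of, shiftMon,
    Finsupp.mapDomain_single, MvPolynomial.X, MvPolynomial.X, monomial_mul, one_mul]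
  rfl

lemma shift_zero_apply {Y : Type*} (p : PL K Y) : shift K 0 p = p := by
  have : shiftVar (Y := Y) 0 = id := funext fun _ => rfl
  rw [shift, this, rename_id_apply]

lemma tv_commutator_mem_comapIota (hJ : IsLPIdeal K J) (hD : Did K X ≤ J) (x : X) :
    tv K * gen K (some x) - gen K (some x) * tv K ∈ comapIota hJ := by
  rw [mem_comapIota, iota_sub, tv, iota_gen_mul_gen, iota_gen_mul_gen, ← neg_sub]
  exact J.neg_mem (hD (Ideal.subset_span ⟨0, _, ⟨x, rfl⟩, (shift_zero_apply _).symm⟩))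

lemma mem_comapIota_of_mul_tv_mem (hJ : IsLPIdeal K J) (hLS : IsLSat K J) {e : ℕ}
    {h : FA K (Option X)} (hh : IsHomog K e h) (hht : h * tv K ∈ comapIota hJ) :
    h ∈ comapIota hJ := by
  rw [mem_comapIota] at hht ⊢
  by_cases h0 : iota K h = 0
  · rw [h0]; exact J.zero_mem
  have hlen : FreeMonoid.length (FreeMonoid.of (none : Option X) ^ e) = e := by
    rw [FreeMonoid.length_pow, FreeMonoid.length_of, Nat.mul_one]
  refine hLS _ ⟨⟨h, rfl⟩, _, isMultiHomog_iota hh hlen⟩ ?_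
  have htd := (isHomogeneous_iota hh).totalDegree h0
  convert hht using 1
  rw [tv, gen, MonoidAlgebra.of_apply, iota_mul_single hh, wordExp_of, shiftMon,
    Finsupp.mapDomain_single, mul_comm]
  congr 3
  exact PNat.eq (by simp [htd, Nat.add_comm])

end LetterplaceHypotheses

theorem statement_9_general (K : Type*) [Field K] (X : Type*)
    (J : Ideal (PL K (Option X))) (hJ : IsLPIdeal K J) (hD : Did K X ≤ J)
    (hLS : IsLSat K J) :
    ∃ I : TwoSidedIdeal (FA K (Option X)),
      (I : Set (FA K (Option X))) =
        iota K ⁻¹' ((J : Set (PL K (Option X))) ∩ Set.range (iota K)) ∧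
      IsGradedF K I ∧ Cideal K ≤ I ∧
      ∀ f ∈ I, (∃ d, IsHomog K d f) → f ∉ Cideal K → hstarO K (phi K f) ∈ I := by
  have hcomm := tv_commutator_mem_comapIota hJ hD
  have hsat : ∀ e h, IsHomog K e h → h * tv K ∈ comapIota hJ → h ∈ comapIota hJ :=
    fun _ _ => mem_comapIota_of_mul_tv_mem hJ hLS
  refine ⟨comapIota hJ, ?_, hJ.isGradedF_comapIota, cideal_le hcomm,
    fun f hf ⟨d, hd⟩ _ => hstarO_phi_mem hsat hcomm hd hf⟩
  ext f
  simp

/-- If `D ⊆ J ⊆ P̄` is an `L`-saturated letterplace ideal and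
`I = ῑ⁻¹(J ∩ V̄)`, then `I` is a saturated graded two-sided ideal of `F̄` containing `C`. -/
theorem statement_9 (K : Type*) [Field K] (X : Type*) [Countable X]
    (J : Ideal (PL K (Option X))) (hJ : IsLPIdeal K J) (hD : Did K X ≤ J)
    (hLS : IsLSat K J) :
    ∃ I : TwoSidedIdeal (FA K (Option X)),
      (I : Set (FA K (Option X))) =
        iota K ⁻¹' ((J : Set (PL K (Option X))) ∩ Set.range (iota K)) ∧
      IsGradedF K I ∧ Cideal K ≤ I ∧
      ∀ f ∈ I, (∃ d, IsHomog K d f) → f ∉ Cideal K → hstarO K (phi K f) ∈ I :=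
  statement_9_general K X J hJ hD hLS
end
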